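/- Let S = {x : Fx ≤ g} be a polytope, ℱ a face of S with vertex set vert(ℱ), and H : ℝⁿ → ℝ twice continuously differentiable. Let T_ℱ ∈ ℝ^{n×d} have columns spanning the tangent subspace of ℱ, and suppose T_ℱᵀ (∂²H(x)/∂x²) T_ℱ ⪰ -ε I_d for all x ∈ ℱ, with ε ≥ 0. If H(v) + (ε/2)‖v‖₂² ≤ t for every vertex v ∈ vert(ℱ), then H(z) ≤ t for every z ∈ ℱ. -/

import Mathlib

/-!
Along every direction tangent to `ℱ`, adding `(ε/2)‖x‖²` raises the second derivative of `H` by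
`ε‖v‖²`, so the tangential Hessian bound makes `H + (ε/2)‖·‖²` convex on `ℱ`; convexity is checked
on segments, where it is nonnegativity of the second derivative of a real function. A convex
function on the convex hull of finitely many points is bounded by its largest value at them, and
`H ≤ H + (ε/2)‖·‖²` because `ε ≥ 0`.
-/

open Set

section NormedSpace

variable {E F : Type*} [NormedAddCommGroup E] [NormedSpace ℝ E]
  [NormedAddCommGroup F] [NormedSpace ℝ F]

theorem convexOn_of_convexOn_comp_lineMap {K : Set E} {f : E → ℝ} (hK : Convex ℝ K)
    (h : ∀ x ∈ K, ∀ y ∈ K,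
      ConvexOn ℝ (Icc (0 : ℝ) 1) fun s => f (AffineMap.lineMap x y s)) :
    ConvexOn ℝ K f := by
  refine ⟨hK, fun x hx y hy a b ha hb hab => ?_⟩
  have hline := (h x hx y hy).2 (left_mem_Icc.2 zero_le_one) (right_mem_Icc.2 zero_le_one)
    ha hb hab
  obtain rfl : a = 1 - b := by linarith
  simpa [AffineMap.lineMap_apply_module] using hline

theorem ContDiff.hasDerivAt_comp_lineMap {f : E → F} (hf : ContDiff ℝ 2 f) (x y : E) (s : ℝ) :
    HasDerivAt (fun s => f (AffineMap.lineMap x y s))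
      (fderiv ℝ f (AffineMap.lineMap x y s) (y - x)) s :=
  ((hf.differentiable two_ne_zero).differentiableAt.hasFDerivAt).comp_hasDerivAt s
    AffineMap.hasDerivAt_lineMap

theorem ContDiff.hasDerivAt_fderiv_comp_lineMap {f : E → F} (hf : ContDiff ℝ 2 f)
    (x y : E) (s : ℝ) :
    HasDerivAt (fun s => fderiv ℝ f (AffineMap.lineMap x y s) (y - x))
      (iteratedFDeriv ℝ 2 f (AffineMap.lineMap x y s) ![y - x, y - x]) s := by
  have hdf : Differentiable ℝ (fderiv ℝ f) :=
    (hf.fderiv_right (m := 1) le_rfl).differentiable one_ne_zero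
  rw [iteratedFDeriv_two_apply]
  exact (ContinuousLinearMap.apply ℝ F (y - x)).hasFDerivAt.comp_hasDerivAt s
    ((hdf _).hasFDerivAt.comp_hasDerivAt s AffineMap.hasDerivAt_lineMap)

theorem ContDiff.convexOn_of_iteratedFDeriv_two_nonneg {K : Set E} {f : E → ℝ}
    (hK : Convex ℝ K) (hf : ContDiff ℝ 2 f)
    (h : ∀ x ∈ K, ∀ y ∈ K, ∀ z ∈ K, 0 ≤ iteratedFDeriv ℝ 2 f x ![y - z, y - z]) :
    ConvexOn ℝ K f := by
  refine convexOn_of_convexOn_comp_lineMap hK fun x hx y hy => ?_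
  refine convexOn_of_hasDerivWithinAt2_nonneg (convex_Icc 0 1)
    (fun s _ => (hf.hasDerivAt_comp_lineMap x y s).continuousAt.continuousWithinAt)
    (fun s _ => (hf.hasDerivAt_comp_lineMap x y s).hasDerivWithinAt)
    (fun s _ => (hf.hasDerivAt_fderiv_comp_lineMap x y s).hasDerivWithinAt) fun s hs => ?_
  rw [interior_Icc] at hs
  exact h _ (hK.lineMap_mem hx hy (Ioo_subset_Icc_self hs)) y hy x hx

end NormedSpace

section InnerProductSpace

variable {E : Type*} [NormedAddCommGroup E] [InnerProductSpace ℝ E]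

theorem iteratedFDeriv_two_norm_sq_apply (x v : E) :
    iteratedFDeriv ℝ 2 (fun x : E => ‖x‖ ^ 2) x ![v, v] = 2 * ‖v‖ ^ 2 := by
  rw [iteratedFDeriv_two_apply, fderiv_norm_sq, ← FunLike.coe_smul, ContinuousLinearMap.fderiv]
  simp only [Matrix.cons_val_zero, Matrix.cons_val_one, smul_apply]
  rw [innerSL_apply_apply, real_inner_self_eq_norm_sq, nsmul_eq_mul, Nat.cast_ofNat]

theorem ContDiff.convexOn_add_norm_sq {K : Set E} {f : E → ℝ} {ε : ℝ} (hK : Convex ℝ K)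
    (hf : ContDiff ℝ 2 f)
    (h : ∀ x ∈ K, ∀ y ∈ K, ∀ z ∈ K,
      -(ε * ‖y - z‖ ^ 2) ≤ iteratedFDeriv ℝ 2 f x ![y - z, y - z]) :
    ConvexOn ℝ K fun x => f x + ε / 2 * ‖x‖ ^ 2 := by
  have hsq : ContDiff ℝ 2 fun x : E => ε / 2 * ‖x‖ ^ 2 :=
    contDiff_const.mul (contDiff_norm_sq ℝ)
  refine (hf.add hsq).convexOn_of_iteratedFDeriv_two_nonneg hK fun x hx y hy z hz => ?_
  have hsmul : (fun x : E => ε / 2 * ‖x‖ ^ 2) = fun x => (ε / 2) • ‖x‖ ^ 2 := rfl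
  rw [fun_iteratedFDeriv_add_apply hf.contDiffAt hsq.contDiffAt, hsmul,
    iteratedFDeriv_const_smul_apply' (contDiff_norm_sq ℝ).contDiffAt]
  simp only [add_apply, smul_apply, iteratedFDeriv_two_norm_sq_apply, smul_eq_mul]
  linarith [h x hx y hy z hz]

end InnerProductSpace

theorem stmt19_general {n d : ℕ}
    (ℱ : Set (EuclideanSpace ℝ (Fin n)))
    (Vf : Finset (EuclideanSpace ℝ (Fin n)))
    (hhull : ℱ = convexHull ℝ (Vf : Set (EuclideanSpace ℝ (Fin n))))
    (tcol : Fin d → EuclideanSpace ℝ (Fin n))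
    (hspan : ∀ x ∈ ℱ, ∀ y ∈ ℱ, x - y ∈ Submodule.span ℝ (Set.range tcol))
    (H : EuclideanSpace ℝ (Fin n) → ℝ) (hC2 : ContDiff ℝ 2 H)
    (ε : ℝ) (hε : 0 ≤ ε)
    (hHess : ∀ x ∈ ℱ, ∀ c : Fin d → ℝ,
      -(ε * ‖∑ i, c i • tcol i‖ ^ 2) ≤
        iteratedFDeriv ℝ 2 H x ![∑ i, c i • tcol i, ∑ i, c i • tcol i])
    (t : ℝ) (hvert : ∀ v ∈ Vf, H v + ε / 2 * ‖v‖ ^ 2 ≤ t) :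
    ∀ z ∈ ℱ, H z ≤ t := by
  have hconvex : ConvexOn ℝ ℱ fun x => H x + ε / 2 * ‖x‖ ^ 2 := by
    refine hC2.convexOn_add_norm_sq (hhull ▸ convex_convexHull ℝ _) fun x hx y hy z hz => ?_
    obtain ⟨c, hc⟩ := (Submodule.mem_span_range_iff_exists_fun ℝ).mp (hspan y hy z hz)
    simpa only [← hc] using hHess x hx c
  intro z hz
  obtain ⟨w, hw, hzw⟩ :=
    hconvex.exists_ge_of_mem_convexHull (hhull ▸ subset_convexHull ℝ _) (hhull ▸ hz)
  have hreg : 0 ≤ ε / 2 * ‖z‖ ^ 2 := by positivity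
  linarith [hvert w hw]

/-- Face-restricted vertex verification. Let ℱ be a face of the polytope
S (intersection of S with a supporting hyperplane) with vertex set Vf, tangent
directions tcol spanning its tangent subspace, H be C², and suppose the tangential
Hessian satisfies Tᵀ(∂²H)T ⪰ -εI on ℱ with ε ≥ 0. If H(v) + (ε/2)‖v‖² ≤ t at every
vertex v of ℱ, then H(z) ≤ t for every z ∈ ℱ. -/
theorem stmt19 {n s d : ℕ}
    (F : Fin s → EuclideanSpace ℝ (Fin n)) (g : Fin s → ℝ)
    (S : Set (EuclideanSpace ℝ (Fin n)))
    (hS : S = {x | ∀ i, inner ℝ (F i) x ≤ g i})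
    (hSbdd : Bornology.IsBounded S)
    (ℱ : Set (EuclideanSpace ℝ (Fin n)))
    (hface : ∃ (a : EuclideanSpace ℝ (Fin n)) (b : ℝ),
      (∀ x ∈ S, inner ℝ a x ≤ b) ∧ ℱ = {x ∈ S | inner ℝ a x = (b : ℝ)})
    (Vf : Finset (EuclideanSpace ℝ (Fin n))) (hVf : (Vf : Set _) ⊆ ℱ)
    (hhull : ℱ = convexHull ℝ (Vf : Set (EuclideanSpace ℝ (Fin n))))
    (tcol : Fin d → EuclideanSpace ℝ (Fin n))
    (hspan : ∀ x ∈ ℱ, ∀ y ∈ ℱ, x - y ∈ Submodule.span ℝ (Set.range tcol))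
    (H : EuclideanSpace ℝ (Fin n) → ℝ) (hC2 : ContDiff ℝ 2 H)
    (ε : ℝ) (hε : 0 ≤ ε)
    (hHess : ∀ x ∈ ℱ, ∀ c : Fin d → ℝ,
      -(ε * ‖∑ i, c i • tcol i‖ ^ 2) ≤
        iteratedFDeriv ℝ 2 H x ![∑ i, c i • tcol i, ∑ i, c i • tcol i])
    (t : ℝ) (hvert : ∀ v ∈ Vf, H v + ε / 2 * ‖v‖ ^ 2 ≤ t) :
    ∀ z ∈ ℱ, H z ≤ t :=
  stmt19_general ℱ Vf hhull tcol hspan H hC2 ε hε hHess t hvert
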